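/- Under the same hypotheses ((F, τ₀) a difference field with F/K an algebraic function field of one variable, r ∈ F^× with v_P(τ₀ⁱr) > 0 for all i ≥ 0 at a place P, no algebraic solutions of Eq(A, i) for i ≥ 1, Y transcendental over F, τ(Y) = 1 + r/Y), there is no S ∈ F(Y) such that S + (r/Y²)·τ(S) + α/Y = 0 for any α ∈ F^×. -/

import Mathlib

universe u

/-- `MoebiusEq f M g` means `f * (M₂₁ g + M₂₂) = M₁₁ g + M₁₂`, i.e. `Eq(f; M; g)`. -/
def MoebiusEq {U : Type*} [Field U] (f : U) (M : Matrix (Fin 2) (Fin 2) U) (g : U) : Prop :=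
  f * (M 1 0 * g + M 1 1) = M 0 0 * g + M 0 1

/-- The τ-twisted cocycle `A_i = (τ^{i-1}A)⋯(τA)A`. -/
def cocycle {L : Type*} [Field L] (τ : L →+* L) (A : Matrix (Fin 2) (Fin 2) L) :
    ℕ → Matrix (Fin 2) (Fin 2) L
  | 0 => 1
  | n + 1 => A.map ((⇑τ)^[n]) * cocycle τ A n

/-!
Write `S = N / D`. Clearing denominators gives a polynomial identity (`clearedEqn`). Evaluated at
the roots of `D` in an algebraic closure, to which `τ₀` extends as `σ`, it links the roots of `D`
by the relation `σ a * b = b + r`: a nonzero root `b` has a predecessor among the roots, and a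
root `a ≠ 1` has a successor. Along such a chain the cocycle of `A = ((1, r), (1, 0))` transports
`Eq(A, ·)`. As there are finitely many roots, either they contain a cycle, which is an algebraic
solution of some `Eq(A, n)`, or there is a chain from `0` to `1`, which makes the first row sum
of `A_n` vanish, whereas the valuation condition makes that row sum a `P`-unit.
-/

open Polynomial

section Moebius

variable {U : Type*} [Field U]

theorem moebiusEq_one (x : U) : MoebiusEq x 1 x := by
  simp [MoebiusEq]

theorem MoebiusEq.mul {x y z : U} {M N : Matrix (Fin 2) (Fin 2) U}
    (hxy : MoebiusEq x M y) (hyz : MoebiusEq y N z) : MoebiusEq x (M * N) z := by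
  unfold MoebiusEq at *
  simp only [Matrix.mul_apply, Fin.sum_univ_two]
  linear_combination (N 1 0 * z + N 1 1) * hxy + (M 0 0 - x * M 1 0) * hyz

theorem MoebiusEq.map {V : Type*} [Field V] (f : U →+* V) {x y : U}
    {M : Matrix (Fin 2) (Fin 2) U} (h : MoebiusEq x M y) :
    MoebiusEq (f x) (M.map f) (f y) := by
  unfold MoebiusEq at *
  simpa using congrArg f h

end Moebius

section Cocycle

variable {L : Type*} [Field L] (τ : L →+* L)

theorem cocycle_succ_eq_map_mul (A : Matrix (Fin 2) (Fin 2) L) (n : ℕ) :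
    cocycle τ A (n + 1) = (cocycle τ A n).map τ * A := by
  induction n with
  | zero => simp [cocycle, Matrix.map_one]
  | succ n ih =>
    calc cocycle τ A (n + 2) = A.map τ^[n + 1] * ((cocycle τ A n).map τ * A) := by
          rw [← ih]; rfl
      _ = (A.map τ^[n] * cocycle τ A n).map τ * A := by
        rw [Matrix.map_mul, Matrix.map_map, ← Function.iterate_succ', Matrix.mul_assoc]

theorem cocycle_row_sum_ne_zero {Γ : Type*} [LinearOrderedAddCommMonoidWithTop Γ]
    (v : AddValuation L Γ) {r : L} (hvr : ∀ i : ℕ, 0 < v (τ^[i] r)) (n : ℕ) :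
    cocycle τ !![1, r; 1, 0] n 0 0 + cocycle τ !![1, r; 1, 0] n 0 1 ≠ 0 := by
  suffices h : ∀ n, v (cocycle τ !![1, r; 1, 0] n 0 0 + cocycle τ !![1, r; 1, 0] n 0 1) = 0 ∧
      v (cocycle τ !![1, r; 1, 0] n 1 0 + cocycle τ !![1, r; 1, 0] n 1 1) = 0 by
    intro h0
    have htop := (h n).1
    rw [h0, v.map_zero] at htop
    exact (lt_of_lt_of_le (hvr 0) le_top).ne' htop
  intro n
  induction n with
  | zero => simp [cocycle]
  | succ n ih =>
    set M := cocycle τ !![1, r; 1, 0] n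
    have hrow : cocycle τ !![1, r; 1, 0] (n + 1) 0 0 + cocycle τ !![1, r; 1, 0] (n + 1) 0 1
        = (M 0 0 + M 0 1) + τ^[n] r * (M 1 0 + M 1 1) := by
      simp only [cocycle, M, Matrix.mul_apply, Matrix.map_apply, Matrix.of_apply,
        Matrix.cons_val', Matrix.cons_val_fin_one, Matrix.cons_val_zero, Matrix.cons_val_one,
        Fin.sum_univ_two, iterate_map_one, one_mul]
      ring
    have hlt : v (M 0 0 + M 0 1) < v (τ^[n] r * (M 1 0 + M 1 1)) := by
      rw [v.map_mul, ih.1, ih.2, add_zero]; exact hvr n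
    refine ⟨by rw [hrow, v.map_add_eq_of_lt_left hlt, ih.1], ?_⟩
    simpa [cocycle, M, Matrix.mul_apply, Fin.sum_univ_two] using ih.1

end Cocycle

section Transport

variable {F U : Type*} [Field F] [Field U] [Algebra F U] {τ₀ : F →+* F} {σ : U →+* U}
  (hσ : ∀ x, σ (algebraMap F U x) = algebraMap F U (τ₀ x)) (A : Matrix (Fin 2) (Fin 2) F)
include hσ

theorem MoebiusEq.cocycle_succ {x y z : U} {n : ℕ}
    (hn : MoebiusEq (σ^[n] x) ((cocycle τ₀ A n).map (algebraMap F U)) y)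
    (hyz : MoebiusEq (σ y) (A.map (algebraMap F U)) z) :
    MoebiusEq (σ^[n + 1] x) ((cocycle τ₀ A (n + 1)).map (algebraMap F U)) z := by
  have hmap : ((cocycle τ₀ A n).map (algebraMap F U)).map σ
      = ((cocycle τ₀ A n).map τ₀).map (algebraMap F U) := by
    ext i j; exact hσ _
  rw [Function.iterate_succ_apply', cocycle_succ_eq_map_mul, Matrix.map_mul, ← hmap]
  exact (hn.map σ).mul hyz

theorem exists_moebiusEq_cocycle_of_reflTransGen {x y : U}
    (h : Relation.ReflTransGen (fun a b ↦ MoebiusEq (σ a) (A.map (algebraMap F U)) b) x y) :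
    ∃ n, MoebiusEq (σ^[n] x) ((cocycle τ₀ A n).map (algebraMap F U)) y := by
  induction h with
  | refl => exact ⟨0, by simpa [cocycle] using moebiusEq_one x⟩
  | tail _ hyz ih =>
    obtain ⟨n, hn⟩ := ih
    exact ⟨n + 1, hn.cocycle_succ hσ A hyz⟩

theorem exists_moebiusEq_cocycle_of_transGen {x y : U}
    (h : Relation.TransGen (fun a b ↦ MoebiusEq (σ a) (A.map (algebraMap F U)) b) x y) :
    ∃ n, 1 ≤ n ∧ MoebiusEq (σ^[n] x) ((cocycle τ₀ A n).map (algebraMap F U)) y := by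
  obtain ⟨b, hxb, hby⟩ := Relation.TransGen.tail'_iff.mp h
  obtain ⟨n, hn⟩ := exists_moebiusEq_cocycle_of_reflTransGen hσ A hxb
  exact ⟨n + 1, n.succ_pos, hn.cocycle_succ hσ A hby⟩

end Transport

section Twist

variable {L : Type*} [Field L] (s : L →+* L) (ρ : L)

/-- `twist s ρ m P` is `X ^ m * P^s (1 + ρ / X)`, a polynomial as soon as `natDegree P ≤ m`. -/
noncomputable def twist (m : ℕ) (P : L[X]) : L[X] :=
  ∑ i ∈ Finset.range (m + 1), C (s (P.coeff i)) * (X + C ρ) ^ i * X ^ (m - i)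

theorem eval₂_twist {E : Type*} [Field E] (j : L →+* E) {m : ℕ} {P : L[X]}
    (hP : P.natDegree ≤ m) {x : E} (hx : x ≠ 0) :
    (twist s ρ m P).eval₂ j x = P.eval₂ (j.comp s) ((x + j ρ) / x) * x ^ m := by
  rw [twist, eval₂_finsetSum, eval₂_eq_sum_range' _ (Nat.lt_succ_of_le hP), Finset.sum_mul]
  refine Finset.sum_congr rfl fun i hi ↦ ?_
  have hxm : x ^ m = x ^ i * x ^ (m - i) := by
    rw [← pow_add, Nat.add_sub_cancel' (Nat.lt_succ_iff.mp (Finset.mem_range.mp hi))]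
  simp only [eval₂_mul, eval₂_pow, eval₂_C, eval₂_add, eval₂_X, RingHom.comp_apply]
  rw [hxm, div_pow]
  field_simp

theorem eval_twist {m : ℕ} {P : L[X]} (hP : P.natDegree ≤ m) {x : L} (hx : x ≠ 0) :
    (twist s ρ m P).eval x = P.eval₂ s ((x + ρ) / x) * x ^ m := by
  simpa using eval₂_twist s ρ (RingHom.id L) hP hx

theorem eval_twist_zero (m : ℕ) (P : L[X]) :
    (twist s ρ m P).eval 0 = s (P.coeff m) * ρ ^ m := by
  rw [twist, eval_finsetSum, Finset.sum_eq_single_of_mem m (Finset.self_mem_range_succ m)]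
  · simp
  · intro i hi hne
    have : m - i ≠ 0 := by have := Finset.mem_range.mp hi; omega
    simp [zero_pow this]

theorem twist_map {K : Type*} [Field K] (τ₀ : K →+* K) (ι : K →+* L)
    (hι : ∀ x, ι (τ₀ x) = s (ι x)) (r : K) (m : ℕ) (P : K[X]) :
    (twist τ₀ r m P).map ι = twist s (ι r) m (P.map ι) := by
  simp only [twist, Polynomial.map_sum, Polynomial.map_mul, Polynomial.map_pow, Polynomial.map_add,
    map_C, map_X, coeff_map, hι]

/-- The equation `S + (ρ / X²) S^s(1 + ρ / X) + β / X = 0` for `S = N / D`, multiplied by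
`X ^ (natDegree N + natDegree D + 2) * D * D^s(1 + ρ / X)`. -/
noncomputable def clearedEqn (β : L) (N D : L[X]) : L[X] :=
  X ^ (N.natDegree + 2) * N * twist s ρ D.natDegree D
    + C ρ * X ^ D.natDegree * twist s ρ N.natDegree N * D
    + C β * X ^ (N.natDegree + 1) * D * twist s ρ D.natDegree D

theorem clearedEqn_map {K : Type*} [Field K] (τ₀ : K →+* K) (ι : K →+* L)
    (hι : ∀ x, ι (τ₀ x) = s (ι x)) (r α : K) (N D : K[X]) :
    (clearedEqn τ₀ r α N D).map ι = clearedEqn s (ι r) (ι α) (N.map ι) (D.map ι) := by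
  simp only [clearedEqn, Polynomial.map_add, Polynomial.map_mul, Polynomial.map_pow, map_X, map_C,
    natDegree_map, twist_map s τ₀ ι hι]

end Twist

section RatFunc

variable {F : Type*} [Field F] {τ₀ : F →+* F} {r : F} {τ : RatFunc F →+* RatFunc F}
  (hτF : ∀ x, τ (algebraMap F (RatFunc F) x) = algebraMap F (RatFunc F) (τ₀ x))
  (hτY : τ RatFunc.X = 1 + algebraMap F (RatFunc F) r / RatFunc.X)
include hτF hτY

theorem algebraMap_twist {m : ℕ} {P : F[X]} (hP : P.natDegree ≤ m) :
    algebraMap F[X] (RatFunc F) (twist τ₀ r m P)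
      = τ (algebraMap F[X] (RatFunc F) P) * RatFunc.X ^ m := by
  have hτ : τ.comp (algebraMap F (RatFunc F)) = (algebraMap F (RatFunc F)).comp τ₀ :=
    RingHom.ext hτF
  have hX : τ RatFunc.X = (RatFunc.X + algebraMap F (RatFunc F) r) / RatFunc.X := by
    rw [hτY, add_div, div_self RatFunc.X_ne_zero]
  have hev (p : F[X]) :
      algebraMap F[X] (RatFunc F) p = p.eval₂ (algebraMap F (RatFunc F)) RatFunc.X := by
    simpa using (eval₂_algebraMap_X p (IsScalarTower.toAlgHom F F[X] (RatFunc F))).symm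
  rw [hev, hev, hom_eval₂, hτ, hX, eval₂_twist τ₀ r _ hP RatFunc.X_ne_zero]

theorem clearedEqn_num_denom_eq_zero {α : F} {S : RatFunc F}
    (hS : S + algebraMap F (RatFunc F) r / RatFunc.X ^ 2 * τ S
      + algebraMap F (RatFunc F) α / RatFunc.X = 0) :
    clearedEqn τ₀ r α S.num S.denom = 0 := by
  set j := algebraMap F[X] (RatFunc F)
  set mN := S.num.natDegree
  set mD := S.denom.natDegree
  have hnum : j S.num = S * j S.denom := by
    rw [← (eq_div_iff (RatFunc.algebraMap_ne_zero S.denom_ne_zero)).mp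
      (RatFunc.num_div_denom S).symm]
  have hτnum : τ (j S.num) = τ S * τ (j S.denom) := by rw [hnum, map_mul]
  have hS' : RatFunc.X ^ 2 * S + algebraMap F (RatFunc F) r * τ S
      + algebraMap F (RatFunc F) α * RatFunc.X = 0 := by
    have hX : (RatFunc.X : RatFunc F) ≠ 0 := RatFunc.X_ne_zero
    rw [← mul_zero (RatFunc.X ^ 2), ← hS]
    field_simp
  apply RatFunc.algebraMap_injective F
  simp only [clearedEqn, map_add, map_mul, map_pow, map_zero, RatFunc.algebraMap_X,
    RatFunc.algebraMap_C, ← RatFunc.algebraMap_eq_C, algebraMap_twist hτF hτY le_rfl]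
  linear_combination (RatFunc.X ^ (mN + mD) * j S.denom * τ (j S.denom)) * hS'
    + (RatFunc.X ^ (mN + mD + 2) * τ (j S.denom)) * hnum
    + (algebraMap F (RatFunc F) r * RatFunc.X ^ (mN + mD) * j S.denom) * hτnum

end RatFunc

theorem AlgebraicClosure.exists_ringHom_extend {F : Type*} [Field F] (τ₀ : F →+* F) :
    ∃ σ : AlgebraicClosure F →+* AlgebraicClosure F,
      ∀ x, σ (algebraMap F _ x) = algebraMap F _ (τ₀ x) := by
  -- `IsAlgClosed.lift` into the algebraic closure viewed as an `F`-algebra through `τ₀`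
  let twisted : Algebra F (AlgebraicClosure F) := ((algebraMap F _).comp τ₀).toAlgebra
  let φ := @IsAlgClosed.lift (AlgebraicClosure F) _ _ F _ _ (AlgebraicClosure F) _ _
    (AlgebraicClosure.instAlgebra F) twisted _ _ _
  exact ⟨@AlgHom.toRingHom F _ _ _ _ _ (AlgebraicClosure.instAlgebra F) twisted φ,
    @AlgHom.commutes F _ _ _ _ _ (AlgebraicClosure.instAlgebra F) twisted φ⟩

theorem Set.Finite.exists_transGen_self {α : Type*} {E : α → α → Prop} {s : Set α}
    (hs : s.Finite) (hne : s.Nonempty) (h : ∀ a ∈ s, ∃ b ∈ s, E a b) :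
    ∃ a ∈ s, Relation.TransGen E a a := by
  choose! f hfs hE using h
  obtain ⟨x, hx⟩ := hne
  have hmem : ∀ k, f^[k] x ∈ s := fun k ↦ Set.MapsTo.iterate hfs k hx
  obtain ⟨i, j, hij, heq⟩ := hs.exists_lt_map_eq_of_forall_mem hmem
  have hpath : ∀ k, i < k → Relation.TransGen E (f^[i] x) (f^[k] x) := by
    intro k hk
    induction k, hk using Nat.le_induction with
    | base =>
      rw [Function.iterate_succ_apply']
      exact .single (hE _ (hmem i))
    | succ k _ ih =>
      rw [Function.iterate_succ_apply']
      exact ih.tail (hE _ (hmem k))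
  exact ⟨f^[i] x, hmem i, heq ▸ hpath j hij⟩

theorem Polynomial.eval_ne_zero_of_isCoprime_of_isRoot {R : Type*} [CommRing R] [Nontrivial R]
    {p q : R[X]} (h : IsCoprime p q) {c : R} (hc : q.IsRoot c) : p.eval c ≠ 0 := by
  have := h.map (evalRingHom c)
  rw [coe_evalRingHom, hc.eq_zero, isCoprime_zero_right] at this
  exact this.ne_zero

section RootDynamics

variable {U : Type*} [Field U] (σ : U →+* U) {ρ β : U} {N D : U[X]}

theorem relation_at_of_clearedEqn_eq_zero (h : clearedEqn σ ρ β N D = 0) {c : U}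
    (hc : c ≠ 0) :
    c ^ 2 * N.eval c * D.eval₂ σ ((c + ρ) / c) + ρ * N.eval₂ σ ((c + ρ) / c) * D.eval c
      + β * c * D.eval c * D.eval₂ σ ((c + ρ) / c) = 0 := by
  have h0 := congrArg (eval c) h
  simp only [clearedEqn, eval_add, eval_mul, eval_pow, eval_X, eval_C, eval_zero,
    eval_twist σ ρ le_rfl hc] at h0
  refine (mul_eq_zero.mp ?_).resolve_left (pow_ne_zero (N.natDegree + D.natDegree) hc)
  linear_combination h0

theorem isRoot_div_sub_one_of_clearedEqn (hρ : ρ ≠ 0) (hcop : IsCoprime N D)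
    (h : clearedEqn σ ρ β N D = 0) {c : U} (hc : D.IsRoot c) (hσc : σ c ≠ 1) :
    D.IsRoot (ρ / (σ c - 1)) := by
  have hden : σ c - 1 ≠ 0 := sub_ne_zero.mpr hσc
  have hw : ρ / (σ c - 1) ≠ 0 := div_ne_zero hρ hden
  have hΦ : (ρ / (σ c - 1) + ρ) / (ρ / (σ c - 1)) = σ c := by
    field_simp; ring
  have := relation_at_of_clearedEqn_eq_zero σ h hw
  rw [hΦ, eval₂_hom, eval₂_hom, hc.eq_zero, map_zero] at this
  simpa [hρ, N.eval_ne_zero_of_isCoprime_of_isRoot hcop hc] using this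

theorem exists_isRoot_mul_eq_of_clearedEqn [IsAlgClosed U] (hD : D ≠ 0) (hcop : IsCoprime N D)
    (h : clearedEqn σ ρ β N D = 0) {c : U} (hc : D.IsRoot c) (hc0 : c ≠ 0) :
    ∃ c', D.IsRoot c' ∧ σ c' * c = c + ρ := by
  have := relation_at_of_clearedEqn_eq_zero σ h hc0
  rw [hc.eq_zero] at this
  have hroot : (D.map σ).IsRoot ((c + ρ) / c) := by
    simpa [eval_map, hc0, N.eval_ne_zero_of_isCoprime_of_isRoot hcop hc] using this
  have hmem : (c + ρ) / c ∈ (D.map σ).roots := (mem_roots (map_ne_zero hD)).mpr hroot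
  rw [(IsAlgClosed.splits D).roots_map σ, Multiset.mem_map] at hmem
  obtain ⟨c', hc', hσc'⟩ := hmem
  exact ⟨c', (mem_roots hD).mp hc', by rw [hσc']; field_simp⟩

theorem exists_isRoot_of_clearedEqn [IsAlgClosed U] (hρ : ρ ≠ 0) (hβ : β ≠ 0) (hD : D.Monic)
    (h : clearedEqn σ ρ β N D = 0) : ∃ c, D.IsRoot c := by
  by_contra hno
  have hD1 : D = 1 := by
    refine hD.natDegree_eq_zero.mp ?_
    by_contra hdeg
    exact hno (IsAlgClosed.exists_root D fun h ↦ hdeg (natDegree_eq_of_degree_eq_some h))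
  have h0 : ρ * (σ N.leadingCoeff * ρ ^ N.natDegree) = 0 := by
    simpa [clearedEqn, hD1, eval_twist_zero] using congrArg (eval 0) h
  have hN : N = 0 := by simpa [hρ] using h0
  rw [hD1, hN] at h
  simp [clearedEqn, twist, hβ] at h

theorem exists_transGen_self_or_reflTransGen_zero_one [IsAlgClosed U] (hρ : ρ ≠ 0) (hβ : β ≠ 0)
    (hD : D.Monic) (hcop : IsCoprime N D) (h : clearedEqn σ ρ β N D = 0) :
    (∃ c, D.IsRoot c ∧ Relation.TransGen (fun a b ↦ σ a * b = b + ρ) c c)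
      ∨ Relation.ReflTransGen (fun a b ↦ σ a * b = b + ρ) 0 1 := by
  have hfin : {c | D.IsRoot c}.Finite := finite_setOfPred_isRoot hD.ne_zero
  by_cases h0 : D.IsRoot 0
  · -- follow the roots reachable from `0`: they either reach `1` or come back on themselves
    set s := {c | D.IsRoot c ∧ Relation.ReflTransGen (fun a b ↦ σ a * b = b + ρ) 0 c}
    by_cases h1 : 1 ∈ s
    · exact .inr h1.2
    suffices hsucc : ∀ c ∈ s, ∃ c' ∈ s, σ c * c' = c' + ρ by
      obtain ⟨c, hc, hcyc⟩ :=
        (hfin.subset (t := s) fun c hc ↦ hc.1).exists_transGen_self ⟨0, h0, .refl⟩ hsucc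
      exact .inl ⟨c, hc.1, hcyc⟩
    rintro c ⟨hc, hc0⟩
    have hσc : σ c ≠ 1 := by
      rintro hσc
      rw [← σ.injective (hσc.trans (map_one σ).symm)] at h1
      exact h1 ⟨hc, hc0⟩
    have hstep : σ c * (ρ / (σ c - 1)) = ρ / (σ c - 1) + ρ := by
      field_simp [sub_ne_zero.mpr hσc]; ring
    exact ⟨_, ⟨isRoot_div_sub_one_of_clearedEqn σ hρ hcop h hc hσc, hc0.tail hstep⟩, hstep⟩
  · -- `0` is not a root, so every root has a predecessor among the roots
    obtain ⟨c, hc, hcyc⟩ :=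
      hfin.exists_transGen_self (exists_isRoot_of_clearedEqn σ hρ hβ hD h) fun c hc ↦
        exists_isRoot_mul_eq_of_clearedEqn σ hD.ne_zero hcop h hc fun hc0 ↦ h0 (hc0 ▸ hc)
    exact .inl ⟨c, hc, Relation.transGen_swap.mp hcyc⟩

end RootDynamics

theorem stmt10_general {F : Type u} [Field F]
    (τ₀ : F →+* F)
    (r : F) (hr : r ≠ 0)
    -- a place `P` of `F/K` with `v_P(τ₀ⁱ r) > 0` for all `i ≥ 0`
    (v : AddValuation F (WithTop ℤ))
    (hvr : ∀ i : ℕ, 0 < v ((⇑τ₀)^[i] r))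
    -- for every `i ≥ 1`, `Eq(A, i)` has no solution algebraic over `F`
    (hnoalg : ∀ (U : Type u) [Field U] [Algebra F U] (σ : U →+* U),
      (∀ x : F, σ (algebraMap F U x) = algebraMap F U (τ₀ x)) →
      ∀ u : U, IsAlgebraic F u → ∀ i : ℕ, 1 ≤ i →
        ¬ MoebiusEq ((⇑σ)^[i] u)
            ((cocycle τ₀ !![1, r; 1, 0] i).map (algebraMap F U)) u)
    -- `τ` extends `τ₀` to `F(Y)` with `τ(Y) = 1 + r/Y`
    (τ : RatFunc F →+* RatFunc F)
    (hτF : ∀ x : F, τ (algebraMap F (RatFunc F) x) = algebraMap F (RatFunc F) (τ₀ x))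
    (hτY : τ RatFunc.X = 1 + algebraMap F (RatFunc F) r / RatFunc.X)
    (α : F) (hα : α ≠ 0) :
    ¬ ∃ S : RatFunc F,
        S + algebraMap F (RatFunc F) r / RatFunc.X ^ 2 * τ S
          + algebraMap F (RatFunc F) α / RatFunc.X = 0 := by
  rintro ⟨S, hS⟩
  obtain ⟨σ, hσ⟩ := AlgebraicClosure.exists_ringHom_extend τ₀
  set ι := algebraMap F (AlgebraicClosure F)
  have hcleared := congrArg (map ι) (clearedEqn_num_denom_eq_zero hτF hτY hS)
  rw [clearedEqn_map σ τ₀ ι (fun x ↦ (hσ x).symm), Polynomial.map_zero] at hcleared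
  have hrel : (fun a b ↦ σ a * b = b + ι r)
      = fun a b ↦ MoebiusEq (σ a) (!![1, r; 1, 0].map ι) b := by
    ext a b
    simp [MoebiusEq]
  rcases exists_transGen_self_or_reflTransGen_zero_one σ ((map_ne_zero ι).mpr hr)
    ((map_ne_zero ι).mpr hα) ((RatFunc.monic_denom S).map ι)
    ((RatFunc.isCoprime_num_denom S).map (mapRingHom ι)) hcleared with ⟨c, hc, hcyc⟩ | hpath
  · rw [hrel] at hcyc
    obtain ⟨n, hn, hmoeb⟩ := exists_moebiusEq_cocycle_of_transGen hσ _ hcyc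
    have halg : IsAlgebraic F c :=
      ⟨S.denom, S.denom_ne_zero, by rwa [aeval_def, eval₂_eq_eval_map]⟩
    exact hnoalg _ σ hσ c halg n hn hmoeb
  · rw [hrel] at hpath
    obtain ⟨n, hmoeb⟩ := exists_moebiusEq_cocycle_of_reflTransGen hσ _ hpath
    refine cocycle_row_sum_ne_zero τ₀ v hvr n (ι.injective ?_)
    simpa [MoebiusEq, Function.iterate_fixed (map_zero σ)] using hmoeb.symm

theorem stmt10 {K : Type*} {F : Type u} [Field K] [CharZero K] [Field F] [Algebra K F]
    -- `F/K` is an algebraic function field of one variable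
    (hFK : ∃ x : F, Transcendental K x ∧
      Algebra.IsAlgebraic (IntermediateField.adjoin K ({x} : Set F)) F)
    (τ₀ : F →+* F) (hτ₀ : Function.Injective τ₀)
    (r : F) (hr : r ≠ 0)
    -- a place `P` of `F/K` with `v_P(τ₀ⁱ r) > 0` for all `i ≥ 0`
    (v : AddValuation F (WithTop ℤ))
    (hvK : ∀ a : K, a ≠ 0 → v (algebraMap K F a) = 0)
    (hvnorm : ∃ z : F, z ≠ 0 ∧ v z = 1)
    (hvr : ∀ i : ℕ, 0 < v ((⇑τ₀)^[i] r))
    -- for every `i ≥ 1`, `Eq(A, i)` has no solution algebraic over `F`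
    (hnoalg : ∀ (U : Type u) [Field U] [Algebra F U] (σ : U →+* U),
      (∀ x : F, σ (algebraMap F U x) = algebraMap F U (τ₀ x)) →
      ∀ u : U, IsAlgebraic F u → ∀ i : ℕ, 1 ≤ i →
        ¬ MoebiusEq ((⇑σ)^[i] u)
            ((cocycle τ₀ !![1, r; 1, 0] i).map (algebraMap F U)) u)
    -- `τ` extends `τ₀` to `F(Y)` with `τ(Y) = 1 + r/Y`
    (τ : RatFunc F →+* RatFunc F)
    (hτF : ∀ x : F, τ (algebraMap F (RatFunc F) x) = algebraMap F (RatFunc F) (τ₀ x))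
    (hτY : τ RatFunc.X = 1 + algebraMap F (RatFunc F) r / RatFunc.X)
    (α : F) (hα : α ≠ 0) :
    ¬ ∃ S : RatFunc F,
        S + algebraMap F (RatFunc F) r / RatFunc.X ^ 2 * τ S
          + algebraMap F (RatFunc F) α / RatFunc.X = 0 :=
  stmt10_general τ₀ r hr v hvr hnoalg τ hτF hτY α hα
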